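/- arXiv:1906.00704 — 3 statements merged into one kernel-verified Lean document; each statement's English description precedes it below -/
import Mathlib

section
/- Let Ω ⊂ ℝ² be a bounded measurable set with |Ω| > 0, and let γ_AA, γ_BB > 0 and γ_AB satisfy -√(γ_AA γ_BB) < γ_AB < √(γ_AA γ_BB). Then for all nonnegative measurable functions f_A, f_B on Ω with ∫_Ω f_A = ∫_Ω f_B = 1/2, the energy E[f_A,f_B] = ∫_Ω ( (γ_AA/2) f_A² + γ_AB f_A f_B + (γ_BB/2) f_B² ) dx satisfies E[f_A,f_B] ≥ (γ_AA + 2γ_AB + γ_BB)/(8|Ω|), with equality for the constant functions f_A = f_B = 1/(2|Ω|). -/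
/-!
Write `Q(u, v) = γAA/2 u² + γAB u v + γBB/2 v²`. The hypothesis on `γAB` says `γAB² < γAA γBB`,
so `Q` is a positive semidefinite quadratic form. Expanding around the point `(p, q)` gives
`Q(u, v) = Q(u - p, v - q) + (affine function of u, v)`; integrating over `Ω` with `(p, q)` the
mean values of `(f_A, f_B)` and dropping the nonnegative term `∫ Q(f - (p, q))` leaves
`Q(∫ f_A, ∫ f_B) / |Ω| = Q(1/2, 1/2) / |Ω|`, a Jensen inequality for `Q`.
-/

open MeasureTheory

noncomputable def binaryQuadForm (a b c u v : ℝ) : ℝ := a / 2 * u ^ 2 + b * u * v + c / 2 * v ^ 2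

section binaryQuadForm

variable {a b c : ℝ}

theorem binaryQuadForm_nonneg (ha : 0 < a) (hb : b ^ 2 ≤ a * c) (u v : ℝ) :
    0 ≤ binaryQuadForm a b c u v := by
  have hsquare : a * (2 * binaryQuadForm a b c u v)
      = (a * u + b * v) ^ 2 + (a * c - b ^ 2) * v ^ 2 := by
    unfold binaryQuadForm; ring
  have hscaled : 0 ≤ a * (2 * binaryQuadForm a b c u v) :=
    hsquare ▸ add_nonneg (sq_nonneg _) (mul_nonneg (sub_nonneg.2 hb) (sq_nonneg v))
  linarith [(mul_nonneg_iff_of_pos_left ha).1 hscaled]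

theorem binaryQuadForm_eq_sub_add (p q u v : ℝ) :
    binaryQuadForm a b c u v = binaryQuadForm a b c (u - p) (v - q)
      + ((a * p + b * q) * u + (b * p + c * q) * v - binaryQuadForm a b c p q) := by
  unfold binaryQuadForm; ring

variable {α : Type*} [MeasurableSpace α] {μ : Measure α} {f g : α → ℝ}

theorem integrable_binaryQuadForm (hf : MemLp f 2 μ) (hg : MemLp g 2 μ) :
    Integrable (fun x ↦ binaryQuadForm a b c (f x) (g x)) μ := by
  have hfg : Integrable (fun x ↦ f x * g x) μ := hf.integrable_mul hg
  exact ((hf.integrable_sq.const_mul (a / 2)).add (hfg.const_mul b)).add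
    (hg.integrable_sq.const_mul (c / 2)) |>.congr
    (.of_forall fun x ↦ by simp only [Pi.add_apply, binaryQuadForm]; ring)

theorem binaryQuadForm_integral_div_le_integral (ha : 0 < a) (hb : b ^ 2 ≤ a * c)
    (hf : MemLp f 2 μ) (hg : MemLp g 2 μ) :
    binaryQuadForm a b c (∫ x, f x ∂μ) (∫ x, g x ∂μ) / μ.real Set.univ
      ≤ ∫ x, binaryQuadForm a b c (f x) (g x) ∂μ := by
  set V := μ.real Set.univ
  -- `V = 0` also when `μ` is infinite; then the left side is the junk value `_ / 0 = 0`.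
  rcases eq_or_ne V 0 with hV | hV
  · rw [hV, div_zero]
    exact integral_nonneg fun x ↦ binaryQuadForm_nonneg ha hb _ _
  have : IsFiniteMeasure μ := ⟨lt_top_iff_ne_top.2 fun h ↦ hV (by simp [V, measureReal_def, h])⟩
  set p := (∫ x, f x ∂μ) / V
  set q := (∫ x, g x ∂μ) / V
  have hfc : MemLp (fun x ↦ f x - p) 2 μ := hf.sub (memLp_const p)
  have hgc : MemLp (fun x ↦ g x - q) 2 μ := hg.sub (memLp_const q)
  have hf₁ : Integrable f μ := hf.integrable one_le_two
  have hg₁ : Integrable g μ := hg.integrable one_le_two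
  have hexpand : ∫ x, binaryQuadForm a b c (f x) (g x) ∂μ
      = ∫ x, binaryQuadForm a b c (f x - p) (g x - q) ∂μ
        + ((a * p + b * q) * ∫ x, f x ∂μ) + ((b * p + c * q) * ∫ x, g x ∂μ)
        - V * binaryQuadForm a b c p q := by
    have hlin : Integrable (fun x ↦ (a * p + b * q) * f x + (b * p + c * q) * g x) μ :=
      (hf₁.const_mul _).add (hg₁.const_mul _)
    have haff : Integrable (fun x ↦ (a * p + b * q) * f x + (b * p + c * q) * g x
        - binaryQuadForm a b c p q) μ := hlin.sub (integrable_const _)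
    simp_rw [binaryQuadForm_eq_sub_add (a := a) (b := b) (c := c) p q (f _) (g _)]
    rw [integral_add (integrable_binaryQuadForm hfc hgc) haff,
      integral_sub hlin (integrable_const _),
      integral_add (hf₁.const_mul _) (hg₁.const_mul _), integral_const_mul, integral_const_mul,
      integral_const, smul_eq_mul]
    ring
  have hmean : (a * p + b * q) * (∫ x, f x ∂μ) + (b * p + c * q) * (∫ x, g x ∂μ)
      - V * binaryQuadForm a b c p q
      = binaryQuadForm a b c (∫ x, f x ∂μ) (∫ x, g x ∂μ) / V := by
    simp only [p, q, binaryQuadForm]; field_simp; ring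
  have hrest : 0 ≤ ∫ x, binaryQuadForm a b c (f x - p) (g x - q) ∂μ :=
    integral_nonneg fun x ↦ binaryQuadForm_nonneg ha hb _ _
  linarith

end binaryQuadForm

theorem stmt_0_general (Ω : Set (EuclideanSpace ℝ (Fin 2)))
    (γAA γBB γAB : ℝ) (hAA : 0 < γAA)
    (hlo : -Real.sqrt (γAA * γBB) < γAB) (hhi : γAB < Real.sqrt (γAA * γBB)) :
    (∀ fA fB : EuclideanSpace ℝ (Fin 2) → ℝ,
      MemLp fA 2 (volume.restrict Ω) → MemLp fB 2 (volume.restrict Ω) →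
      (∀ x ∈ Ω, 0 ≤ fA x) → (∀ x ∈ Ω, 0 ≤ fB x) →
      (∫ x in Ω, fA x) = 1/2 → (∫ x in Ω, fB x) = 1/2 →
      (γAA + 2*γAB + γBB) / (8 * (volume Ω).toReal) ≤
        ∫ x in Ω, (γAA/2 * fA x ^ 2 + γAB * fA x * fB x + γBB/2 * fB x ^ 2)) ∧
    (∫ _x in Ω,
        (γAA/2 * (1/(2*(volume Ω).toReal)) ^ 2
          + γAB * (1/(2*(volume Ω).toReal)) * (1/(2*(volume Ω).toReal))
          + γBB/2 * (1/(2*(volume Ω).toReal)) ^ 2))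
      = (γAA + 2*γAB + γBB) / (8 * (volume Ω).toReal) := by
  have hdisc : γAB ^ 2 ≤ γAA * γBB := (Real.sq_lt.2 ⟨hlo, hhi⟩).le
  refine ⟨fun fA fB hfA hfB _ _ hmA hmB ↦ ?_, ?_⟩
  · have hJensen := binaryQuadForm_integral_div_le_integral hAA hdisc hfA hfB
    rw [hmA, hmB, measureReal_restrict_apply_univ] at hJensen
    refine Eq.trans_le ?_ hJensen
    simp only [binaryQuadForm, measureReal_def]
    ring
  · rw [setIntegral_const, smul_eq_mul, measureReal_def]
    rcases eq_or_ne (volume Ω).toReal 0 with hV | hV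
    · simp [hV]
    · field_simp; ring

/-- Minimization of the simplified segregation energy when
`-√(γAA γBB) < γAB < √(γAA γBB)`: the homogeneous state is optimal. -/
theorem stmt_0 (Ω : Set (EuclideanSpace ℝ (Fin 2)))
    (hΩm : MeasurableSet Ω) (hΩb : Bornology.IsBounded Ω)
    (hΩpos : 0 < volume Ω)
    (γAA γBB γAB : ℝ) (hAA : 0 < γAA) (hBB : 0 < γBB)
    (hlo : -Real.sqrt (γAA * γBB) < γAB) (hhi : γAB < Real.sqrt (γAA * γBB)) :
    (∀ fA fB : EuclideanSpace ℝ (Fin 2) → ℝ,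
      MemLp fA 2 (volume.restrict Ω) → MemLp fB 2 (volume.restrict Ω) →
      (∀ x ∈ Ω, 0 ≤ fA x) → (∀ x ∈ Ω, 0 ≤ fB x) →
      (∫ x in Ω, fA x) = 1/2 → (∫ x in Ω, fB x) = 1/2 →
      (γAA + 2*γAB + γBB) / (8 * (volume Ω).toReal) ≤
        ∫ x in Ω, (γAA/2 * fA x ^ 2 + γAB * fA x * fB x + γBB/2 * fB x ^ 2)) ∧
    (∫ _x in Ω,
        (γAA/2 * (1/(2*(volume Ω).toReal)) ^ 2
          + γAB * (1/(2*(volume Ω).toReal)) * (1/(2*(volume Ω).toReal))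
          + γBB/2 * (1/(2*(volume Ω).toReal)) ^ 2))
      = (γAA + 2*γAB + γBB) / (8 * (volume Ω).toReal) :=
  stmt_0_general Ω γAA γBB γAB hAA hlo hhi
end

section
/- Let Ω ⊂ ℝ² be bounded measurable with |Ω| > 0, γ_AA, γ_BB > 0, and γ_AB > √(γ_AA γ_BB). Then for all nonnegative f_A, f_B ∈ L²(Ω) with ∫ f_A = ∫ f_B = 1/2, the energy E[f_A,f_B] = ∫_Ω ((γ_AA/2) f_A² + γ_AB f_A f_B + (γ_BB/2) f_B²) dx satisfies E[f_A,f_B] ≥ (√γ_AA + √γ_BB)²/(8|Ω|), and moreover if equality holds then f_A(x) f_B(x) = 0 almost everywhere. -/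
/-!
With `a = √γAA` and `b = √γBB` the energy density is
`½ (a fA + b fB)² + (γAB - a b) fA fB`. Jensen's inequality for `x ↦ x²` bounds
`∫ (a fA + b fB)²` below by `(∫ (a fA + b fB))² / |Ω| = ((a + b) / 2)² / |Ω|`, and the overlap
`∫ fA fB` is nonnegative with positive coefficient `γAB - a b`, so it vanishes at equality.
-/

open MeasureTheory Set

section

variable {α : Type*} [MeasurableSpace α] {μ : Measure α}

theorem sq_integral_div_measureReal_univ_le_integral_sq {g : α → ℝ} (hg : MemLp g 2 μ) :
    (∫ x, g x ∂μ) ^ 2 / μ.real univ ≤ ∫ x, g x ^ 2 ∂μ := by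
  rcases (measureReal_nonneg (μ := μ) (s := univ)).eq_or_lt with hV | hV
  · rw [← hV, div_zero]
    exact integral_nonneg fun x => sq_nonneg (g x)
  obtain ⟨hμ0, hμfin⟩ := ENNReal.toReal_pos_iff.mp hV
  have : IsFiniteMeasure μ := ⟨hμfin⟩
  have : NeZero μ := ⟨fun h => hμ0.ne' (by simp [h])⟩
  have jensen := (Even.convexOn_pow (𝕜 := ℝ) even_two).map_average_le
    (continuous_pow 2).continuousOn isClosed_univ
    (Filter.Eventually.of_forall fun x => mem_univ (g x))
    (hg.integrable one_le_two) hg.integrable_sq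
  simp only [average_eq, smul_eq_mul] at jensen
  calc (∫ x, g x ∂μ) ^ 2 / μ.real univ
      = μ.real univ * ((μ.real univ)⁻¹ * ∫ x, g x ∂μ) ^ 2 := by field_simp
    _ ≤ μ.real univ * ((μ.real univ)⁻¹ * ∫ x, g x ^ 2 ∂μ) := by gcongr
    _ = ∫ x, g x ^ 2 ∂μ := by field_simp

variable {γAA γBB γAB : ℝ}

theorem energy_density_eq_half_sq_add_overlap (hAA : 0 ≤ γAA) (hBB : 0 ≤ γBB) (p q : ℝ) :
    γAA/2 * p ^ 2 + γAB * p * q + γBB/2 * q ^ 2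
      = 1/2 * (√γAA * p + √γBB * q) ^ 2 + (γAB - √(γAA * γBB)) * (p * q) := by
  rw [Real.sqrt_mul hAA]
  linear_combination (-(p ^ 2) / 2) * Real.sq_sqrt hAA + (-(q ^ 2) / 2) * Real.sq_sqrt hBB

theorem le_integral_energy [IsFiniteMeasure μ] {fA fB : α → ℝ} (hAA : 0 ≤ γAA) (hBB : 0 ≤ γBB)
    (hA : MemLp fA 2 μ) (hB : MemLp fB 2 μ)
    (hIA : ∫ x, fA x ∂μ = 1/2) (hIB : ∫ x, fB x ∂μ = 1/2) :
    (√γAA + √γBB) ^ 2 / (8 * μ.real univ) + (γAB - √(γAA * γBB)) * ∫ x, fA x * fB x ∂μ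
      ≤ ∫ x, (γAA/2 * fA x ^ 2 + γAB * fA x * fB x + γBB/2 * fB x ^ 2) ∂μ := by
  set g := fun x => √γAA * fA x + √γBB * fB x
  have hg : MemLp g 2 μ := (hA.const_mul _).add (hB.const_mul _)
  have hIg : ∫ x, g x ∂μ = (√γAA + √γBB) / 2 := by
    rw [integral_add ((hA.integrable one_le_two).const_mul _)
      ((hB.integrable one_le_two).const_mul _), integral_const_mul, integral_const_mul, hIA, hIB]
    ring
  have hsplit : ∫ x, (γAA/2 * fA x ^ 2 + γAB * fA x * fB x + γBB/2 * fB x ^ 2) ∂μ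
      = 1/2 * ∫ x, g x ^ 2 ∂μ + (γAB - √(γAA * γBB)) * ∫ x, fA x * fB x ∂μ := by
    have hAB : Integrable (fun x => fA x * fB x) μ := hA.integrable_mul hB
    simp only [energy_density_eq_half_sq_add_overlap hAA hBB]
    rw [integral_add (hg.integrable_sq.const_mul _) (hAB.const_mul _),
      integral_const_mul, integral_const_mul]
  have jensen := sq_integral_div_measureReal_univ_le_integral_sq hg
  rw [hIg] at jensen
  rw [hsplit, add_le_add_iff_right]
  calc (√γAA + √γBB) ^ 2 / (8 * μ.real univ)
      = 1/2 * (((√γAA + √γBB) / 2) ^ 2 / μ.real univ) := by ring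
    _ ≤ 1/2 * ∫ x, g x ^ 2 ∂μ := by gcongr

end

theorem stmt_4_general (Ω : Set (EuclideanSpace ℝ (Fin 2)))
    (hΩm : MeasurableSet Ω) (hΩb : Bornology.IsBounded Ω)
    (γAA γBB γAB : ℝ) (hAA : 0 < γAA) (hBB : 0 < γBB)
    (hAB : Real.sqrt (γAA * γBB) < γAB) :
    ∀ fA fB : EuclideanSpace ℝ (Fin 2) → ℝ,
      MemLp fA 2 (volume.restrict Ω) → MemLp fB 2 (volume.restrict Ω) →
      (∀ x ∈ Ω, 0 ≤ fA x) → (∀ x ∈ Ω, 0 ≤ fB x) →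
      (∫ x in Ω, fA x) = 1/2 → (∫ x in Ω, fB x) = 1/2 →
      ((Real.sqrt γAA + Real.sqrt γBB) ^ 2 / (8 * (volume Ω).toReal) ≤
        ∫ x in Ω, (γAA/2 * fA x ^ 2 + γAB * fA x * fB x + γBB/2 * fB x ^ 2)) ∧
      ((∫ x in Ω, (γAA/2 * fA x ^ 2 + γAB * fA x * fB x + γBB/2 * fB x ^ 2))
          = (Real.sqrt γAA + Real.sqrt γBB) ^ 2 / (8 * (volume Ω).toReal) →
        ∀ᵐ x ∂(volume.restrict Ω), fA x * fB x = 0) := by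
  intro fA fB hfA hfB hA0 hB0 hIA hIB
  have : IsFiniteMeasure (volume.restrict Ω) :=
    isFiniteMeasure_restrict.2 hΩb.measure_lt_top.ne
  have hbound := le_integral_energy (γAB := γAB) hAA.le hBB.le hfA hfB hIA hIB
  rw [measureReal_restrict_apply_univ, measureReal_def] at hbound
  have hprod_nonneg : 0 ≤ᵐ[volume.restrict Ω] fun x => fA x * fB x :=
    ae_restrict_of_forall_mem hΩm fun x hx => mul_nonneg (hA0 x hx) (hB0 x hx)
  have hoverlap_nonneg : 0 ≤ ∫ x in Ω, fA x * fB x := integral_nonneg_of_ae hprod_nonneg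
  have hc : 0 < γAB - √(γAA * γBB) := sub_pos.2 hAB
  refine ⟨by linarith [mul_nonneg hc.le hoverlap_nonneg], fun heq => ?_⟩
  have hoverlap_zero : ∫ x in Ω, fA x * fB x = 0 :=
    le_antisymm (nonpos_of_mul_nonpos_right (by linarith) hc) hoverlap_nonneg
  exact (integral_eq_zero_iff_of_nonneg_ae hprod_nonneg (hfA.integrable_mul hfB)).1 hoverlap_zero

/-- For strong interspecies repulsion `γAB > √(γAA γBB)`, the energy is bounded
below by the phase-separated optimum, with equality only for segregated states. -/
theorem stmt_4 (Ω : Set (EuclideanSpace ℝ (Fin 2)))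
    (hΩm : MeasurableSet Ω) (hΩb : Bornology.IsBounded Ω)
    (hΩpos : 0 < volume Ω)
    (γAA γBB γAB : ℝ) (hAA : 0 < γAA) (hBB : 0 < γBB)
    (hAB : Real.sqrt (γAA * γBB) < γAB) :
    ∀ fA fB : EuclideanSpace ℝ (Fin 2) → ℝ,
      MemLp fA 2 (volume.restrict Ω) → MemLp fB 2 (volume.restrict Ω) →
      (∀ x ∈ Ω, 0 ≤ fA x) → (∀ x ∈ Ω, 0 ≤ fB x) →
      (∫ x in Ω, fA x) = 1/2 → (∫ x in Ω, fB x) = 1/2 →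
      ((Real.sqrt γAA + Real.sqrt γBB) ^ 2 / (8 * (volume Ω).toReal) ≤
        ∫ x in Ω, (γAA/2 * fA x ^ 2 + γAB * fA x * fB x + γBB/2 * fB x ^ 2)) ∧
      ((∫ x in Ω, (γAA/2 * fA x ^ 2 + γAB * fA x * fB x + γBB/2 * fB x ^ 2))
          = (Real.sqrt γAA + Real.sqrt γBB) ^ 2 / (8 * (volume Ω).toReal) →
        ∀ᵐ x ∂(volume.restrict Ω), fA x * fB x = 0) :=
  stmt_4_general Ω hΩm hΩb γAA γBB γAB hAA hBB hAB
end

section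
/- For the periodic domain [-L,L]² and potential Fourier coefficient φ̂^{ST}_{k₁,k₂} = (ν_c^{ST}/ν_d^{ST})·(πκ^{ST}/(2L²))·(R⁴/z²)·H̃(z) with z = (πR/L)√(k₁²+k₂²), the instability threshold for the first mode (k₁,k₂)=(1,0) is s* = (2π/(R² H̃(πR/L))) · √( (D_A + (R²/2π)(ν_c^{AA}/ν_d^{AA})κ^{AA} H̃(πR/L)) (D_B + (R²/2π)(ν_c^{BB}/ν_d^{BB})κ^{BB} H̃(πR/L)) / ((ν_c^{AB}/ν_d^{AB})(ν_c^{BA}/ν_d^{BA}) κ^{AB} κ^{BA}) ), i.e. the determinant expression Δ(M_{1,0})(s) given in the paper vanishes exactly at s = s* and is negative for s > s*. -/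
/-- Instability threshold for the first Fourier mode on the periodic box:
the determinant `Δ(M₁,₀)(s)` vanishes at `s = s*` and is negative beyond. -/
theorem stmt_18 (DA DB a b c d R L h : ℝ)
    (hDA : 0 < DA) (hDB : 0 < DB) (ha : 0 < a) (hb : 0 < b)
    (hc : 0 < c) (hd : 0 < d) (hR : 0 < R) (hL : 0 < L) (hh : 0 < h) :
    let Δ : ℝ → ℝ := fun s => Real.pi ^ 4 / L ^ 4 *
      (DA * DB + R ^ 2 / (2 * Real.pi) * (DB * a + DA * b) * h
        + R ^ 4 / (4 * Real.pi ^ 2) * (a * b - s ^ 2 * c * d) * h ^ 2)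
    let sstar : ℝ := 2 * Real.pi / (R ^ 2 * h) *
      Real.sqrt ((DA + R ^ 2 / (2 * Real.pi) * a * h)
        * (DB + R ^ 2 / (2 * Real.pi) * b * h) / (c * d))
    Δ sstar = 0 ∧ (∀ s, 0 ≤ s → (Δ s < 0 ↔ sstar < s)) := by
  intro Δ sstar
  have hπ : (0:ℝ) < Real.pi := Real.pi_pos
  set u : ℝ := DA + R ^ 2 / (2 * Real.pi) * a * h with hu
  set v : ℝ := DB + R ^ 2 / (2 * Real.pi) * b * h with hv
  have hupos : 0 < u := by positivity
  have hvpos : 0 < v := by positivity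
  have hs2 : sstar ^ 2 = (2 * Real.pi / (R ^ 2 * h)) ^ 2 * (u * v / (c * d)) := by
    show ((2 * Real.pi / (R ^ 2 * h)) * Real.sqrt (u * v / (c * d))) ^ 2 = _
    rw [mul_pow, Real.sq_sqrt (by positivity)]
  have hsstarpos : 0 < sstar := by
    have : 0 < Real.sqrt (u * v / (c * d)) := Real.sqrt_pos.2 (by positivity)
    exact mul_pos (by positivity) this
  have key : ∀ s : ℝ, Δ s =
      Real.pi ^ 4 / L ^ 4 * (c * d * R ^ 4 * h ^ 2 / (4 * Real.pi ^ 2)) *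
        (sstar ^ 2 - s ^ 2) := by
    intro s
    show Real.pi ^ 4 / L ^ 4 *
      (DA * DB + R ^ 2 / (2 * Real.pi) * (DB * a + DA * b) * h
        + R ^ 4 / (4 * Real.pi ^ 2) * (a * b - s ^ 2 * c * d) * h ^ 2) = _
    rw [hs2, hu, hv]
    field_simp
    ring
  have hcoef : 0 < Real.pi ^ 4 / L ^ 4 * (c * d * R ^ 4 * h ^ 2 / (4 * Real.pi ^ 2)) := by
    positivity
  constructor
  · rw [key sstar]; ring
  · intro s hs
    rw [key s]
    constructor
    · intro hlt
      have h2 : sstar ^ 2 - s ^ 2 < 0 := by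
        by_contra hcon
        push_neg at hcon
        exact absurd hlt (not_lt.2 (mul_nonneg hcoef.le hcon))
      have : sstar ^ 2 < s ^ 2 := by linarith
      exact lt_of_pow_lt_pow_left₀ 2 hs this
    · intro hlt
      have h2 : sstar ^ 2 < s ^ 2 := by
        have := pow_lt_pow_left₀ hlt hsstarpos.le (n := 2) (by norm_num)
        exact this
      have : sstar ^ 2 - s ^ 2 < 0 := by linarith
      exact mul_neg_of_pos_of_neg hcoef this
end
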